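/- arXiv:2006.13271 — 2 statements merged into one kernel-verified Lean document; each statement's English description precedes it below -/
import Mathlib

section
/- Let Ω be the A₀ᴿ-module with generators dz₁, dz₂, dθ and the single defining relation z₂·dz₁ + z₁·dz₂ = 0, and let φ : Ω → A₀ᴿ ⊕ A₀ᴿ be the well-defined A₀ᴿ-linear map with φ(dz₁) = (z̄₁, 0), φ(dz₂) = (−z̄₂, 0), φ(dθ) = (0, 1). Then: (a) the kernel of φ is the cyclic submodule generated by z₁·dz₂, whose annihilator ideal is exactly (z̄₁, z̄₂), so that ker φ ≅ A₀ᴿ/(z̄₁, z̄₂) is a two-dimensional ℂ-vector space with basis the classes of z₁·dz₂ and θz₁·dz₂; and (b) the image of φ is (z̄₁, z̄₂) ⊕ A₀ᴿ, so the cokernel of φ is isomorphic to A₀ᴿ/(z̄₁, z̄₂). -/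
open MvPolynomial

noncomputable section

/-- The polynomial ring `ℂ[z₁,z₂,θ]`: variables `X 0 = z₁`, `X 1 = z₂`, `X 2 = θ`. -/
abbrev P3 : Type := MvPolynomial (Fin 3) ℂ

/-- The ideal `(z₁z₂, θ²)` of relations of the Ramond node. -/
def rIdeal : Ideal P3 := Ideal.span {X 0 * X 1, X 2 ^ 2}

/-- The local coordinate ring `A₀ᴿ = ℂ[z₁,z₂,θ]/(z₁z₂, θ²)` of a Ramond node. -/
abbrev A0R : Type := P3 ⧸ rIdeal

/-- `z̄₁ ∈ A₀ᴿ`. -/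
def z1 : A0R := Ideal.Quotient.mk rIdeal (X 0)
/-- `z̄₂ ∈ A₀ᴿ`. -/
def z2 : A0R := Ideal.Quotient.mk rIdeal (X 1)
/-- `θ̄ ∈ A₀ᴿ`. -/
def th : A0R := Ideal.Quotient.mk rIdeal (X 2)

set_option synthInstance.maxHeartbeats 400000
set_option maxHeartbeats 1000000

/-- The standard generators of the free module `(A₀ᴿ)³`:
`dd 0 = dz₁`, `dd 1 = dz₂`, `dd 2 = dθ`. -/
def dd (i : Fin 3) : Fin 3 → A0R := Pi.single i 1

/-- The submodule of relations of `Ω`: the single relation `z₂·dz₁ + z₁·dz₂ = 0`. -/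
def omegaRelModR : Submodule A0R (Fin 3 → A0R) :=
  Submodule.span A0R {z2 • dd 0 + z1 • dd 1}

/-- The module `Ω` of super Kähler differentials of `A₀ᴿ`. -/
abbrev OmegaR : Type := (Fin 3 → A0R) ⧸ omegaRelModR

/-- The class `k` of `z₁·dz₂` in `Ω`. -/
def k : OmegaR := Submodule.Quotient.mk (z1 • dd 1)

section AuxLemmas


def sg (j : Fin 3) : P3 →ₐ[ℂ] P3 := aeval (Function.update X j 0)

lemma sg_X_same (j : Fin 3) : sg j (X j) = 0 := by simp [sg]

lemma sg_X_ne (j i : Fin 3) (h : i ≠ j) : sg j (X i) = X i := by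
  simp [sg, Function.update_apply, h]

lemma sub_sg_mem (j : Fin 3) (p : P3) : p - sg j p ∈ Ideal.span {X j} := by
  induction p using MvPolynomial.induction_on with
  | C a => simp [sg]
  | add p q hp hq =>
      have : p + q - sg j (p + q) = (p - sg j p) + (q - sg j q) := by
        rw [map_add]; ring
      rw [this]; exact add_mem hp hq
  | mul_X p i hp =>
      rw [map_mul]
      by_cases h : i = j
      · subst h
        rw [sg_X_same, mul_zero, sub_zero]
        exact Ideal.mem_span_singleton.2 (dvd_mul_left _ _)
      · rw [sg_X_ne j i h]
        have : p * X i - sg j p * X i = (p - sg j p) * X i := by ring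
        rw [this]
        exact Ideal.mul_mem_right _ _ hp

lemma X_dvd_iff_sg (j : Fin 3) (p : P3) : X j ∣ p ↔ sg j p = 0 := by
  constructor
  · rintro ⟨c, rfl⟩
    rw [map_mul, sg_X_same, zero_mul]
  · intro h
    have := sub_sg_mem j p
    rw [h, sub_zero] at this
    exact Ideal.mem_span_singleton.1 this

lemma prime_X3 (j : Fin 3) : Prime (X j : P3) := by
  refine ⟨X_ne_zero j, ?_, ?_⟩
  · intro h
    have := (X_dvd_iff_sg j 1).1 h.dvd
    simp at this
  · intro a b hab
    rw [X_dvd_iff_sg] at hab ⊢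
    rw [X_dvd_iff_sg j b]
    rw [map_mul] at hab
    exact mul_eq_zero.1 hab


lemma X2sq_ne : (X 2 ^ 2 : P3) ≠ 0 := pow_ne_zero _ (X_ne_zero 2)

lemma not_X_dvd_X2sq (i : Fin 3) (hi : i ≠ 2) : ¬ (X i : P3) ∣ X 2 ^ 2 := by
  rw [X_dvd_iff_sg, map_pow, sg_X_ne i 2 (Ne.symm hi)]
  exact X2sq_ne

/-- Key lemma. -/
lemma key (i j : Fin 3) (hij : i ≠ j) (hi2 : i ≠ 2) (hj2 : j ≠ 2) (A B : P3)
    (h : X i * A - X j * B ∈ Ideal.span {X i * X j, X (2:Fin 3) ^ 2}) :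
    X i * A ∈ Ideal.span {X i * X j, X (2:Fin 3) ^ 2} ∧
      A ∈ Ideal.span {X j, X (2:Fin 3) ^ 2} := by
  rw [Ideal.mem_span_pair] at h
  obtain ⟨u, v, huv⟩ := h
  -- apply sg j
  have h2 : X i * sg j A = sg j v * X 2 ^ 2 := by
    have := congrArg (sg j) huv
    simp only [map_sub, map_add, map_mul, map_pow, sg_X_same, sg_X_ne j i hij,
      sg_X_ne j 2 (Ne.symm hj2)] at this
    linear_combination -this
  have hdvd : (X i : P3) ∣ sg j v := by
    rcases (prime_X3 i).2.2 (sg j v) (X 2 ^ 2) ⟨sg j A, by linear_combination -h2⟩ with h' | h'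
    · exact h'
    · exact absurd h' (not_X_dvd_X2sq i hi2)
  obtain ⟨c, hc⟩ := hdvd
  have hA : sg j A = c * X 2 ^ 2 := by
    have : X i * sg j A = X i * (c * X 2 ^ 2) := by rw [h2, hc]; ring
    exact mul_left_cancel₀ (X_ne_zero i) this
  obtain ⟨s, hs⟩ := Ideal.mem_span_singleton.1 (sub_sg_mem j A)
  -- A = X j * s + c * X 2 ^ 2
  have hAeq : A = X j * s + c * X 2 ^ 2 := by rw [← hA, ← hs]; ring
  constructor
  · rw [Ideal.mem_span_pair]
    exact ⟨s, X i * c, by rw [hAeq]; ring⟩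
  · rw [Ideal.mem_span_pair]
    exact ⟨s, c, by rw [hAeq]; ring⟩


def dP : P3 →ₐ[ℂ] Polynomial ℂ := aeval ![0, 0, Polynomial.X]
def uP : Polynomial ℂ →ₐ[ℂ] P3 := Polynomial.aeval (X 2)

lemma sub_ud_mem (p : P3) : p - uP (dP p) ∈ Ideal.span {(X 0 : P3), X 1} := by
  induction p using MvPolynomial.induction_on with
  | C a => simp [dP, uP, Polynomial.aeval_C]
  | add p q hp hq =>
      have : p + q - uP (dP (p + q)) = (p - uP (dP p)) + (q - uP (dP q)) := by
        rw [map_add, map_add]; ring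
      rw [this]; exact add_mem hp hq
  | mul_X p i hp =>
      fin_cases i
      · show p * X 0 - uP (dP (p * X 0)) ∈ Ideal.span {(X 0 : P3), X 1}
        have h : p * X 0 - uP (dP (p * X 0)) = p * X 0 := by
          simp [dP, uP]
        rw [h]
        exact Ideal.mul_mem_left _ p (Ideal.subset_span (by simp))
      · show p * X 1 - uP (dP (p * X 1)) ∈ Ideal.span {(X 0 : P3), X 1}
        have h : p * X 1 - uP (dP (p * X 1)) = p * X 1 := by
          simp [dP, uP]
        rw [h]
        exact Ideal.mul_mem_left _ p (Ideal.subset_span (by simp))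
      · show p * X 2 - uP (dP (p * X 2)) ∈ Ideal.span {(X 0 : P3), X 1}
        have h : p * X 2 - uP (dP (p * X 2)) = (p - uP (dP p)) * X 2 := by
          rw [map_mul, map_mul]
          have : dP (X 2 : P3) = Polynomial.X := by simp [dP]
          rw [this]
          have : uP Polynomial.X = X 2 := by simp [uP]
          rw [this]; ring
        rw [h]
        exact Ideal.mul_mem_right _ _ hp

lemma poly_decomp (p : P3) : ∃ (α β : ℂ),
    p - (C α + C β * X 2) ∈ Ideal.span {(X 0 : P3), X 1, X 2 ^ 2} := by
  set f := dP p with hf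
  refine ⟨f.coeff 0, f.coeff 1, ?_⟩
  have h1 : Polynomial.X * f.divX + Polynomial.C (f.coeff 0) = f := Polynomial.X_mul_divX_add f
  have h2 : Polynomial.X * f.divX.divX + Polynomial.C (f.divX.coeff 0) = f.divX :=
    Polynomial.X_mul_divX_add f.divX
  have h3 : f.divX.coeff 0 = f.coeff 1 := Polynomial.coeff_divX
  have hfeq : f = Polynomial.X ^ 2 * f.divX.divX + Polynomial.C (f.coeff 1) * Polynomial.X
      + Polynomial.C (f.coeff 0) := by
    have hc3 : Polynomial.C (f.divX.coeff 0) = Polynomial.C (f.coeff 1) := by rw [h3]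
    linear_combination (-1 : Polynomial ℂ) * h1 - Polynomial.X * h2 + Polynomial.X * hc3
  have hX : uP Polynomial.X = X 2 := by simp [uP]
  have hC : ∀ a : ℂ, uP (Polynomial.C a) = C a := fun a => by
    simp [uP, algebraMap_eq]
  have huf : uP f = X 2 ^ 2 * uP f.divX.divX + C (f.coeff 1) * X 2 + C (f.coeff 0) := by
    conv_lhs => rw [hfeq]
    simp only [map_add, map_mul, map_pow, hX, hC]
  have hsplit : p - (C (f.coeff 0) + C (f.coeff 1) * X 2)
      = (p - uP (dP p)) + X 2 ^ 2 * uP f.divX.divX := by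
    rw [← hf, huf]; ring
  rw [hsplit]
  refine add_mem ?_ ?_
  · refine Ideal.span_mono ?_ (sub_ud_mem p)
    intro x hx
    rcases hx with h | h
    · exact Or.inl h
    · exact Or.inr (Or.inl h)
  · exact Ideal.mul_mem_right _ _ (Ideal.subset_span (by simp))


local notation "mkq" => Ideal.Quotient.mk rIdeal

lemma mul_X01_mem : (X 0 * X 1 : P3) ∈ rIdeal := Ideal.subset_span (by simp)
lemma X2sq_mem : (X 2 ^ 2 : P3) ∈ rIdeal := Ideal.subset_span (by simp)

lemma hz12 : z1 * z2 = 0 := by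
  rw [z1, z2, ← map_mul, Ideal.Quotient.eq_zero_iff_mem]
  exact mul_X01_mem

lemma hth2 : th ^ 2 = 0 := by
  rw [th, ← map_pow, Ideal.Quotient.eq_zero_iff_mem]
  exact X2sq_mem

lemma rIdeal_eq' : Ideal.span {X 1 * X 0, X (2:Fin 3) ^ 2} = rIdeal := by
  rw [rIdeal, mul_comm]

lemma eqzero (a b : A0R) (h : z1 * a = z2 * b) : z1 * a = 0 ∧ z2 * b = 0 := by
  obtain ⟨A, rfl⟩ := Ideal.Quotient.mk_surjective a
  obtain ⟨B, rfl⟩ := Ideal.Quotient.mk_surjective b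
  have hmem : X 0 * A - X 1 * B ∈ rIdeal := by
    rw [← Ideal.Quotient.eq_zero_iff_mem, map_sub, map_mul, map_mul, sub_eq_zero]
    exact h
  constructor
  · have := (key 0 1 (by decide) (by decide) (by decide) A B hmem).1
    rw [z1, ← map_mul, Ideal.Quotient.eq_zero_iff_mem]
    exact this
  · have hmem' : X 1 * B - X 0 * A ∈ Ideal.span {X 1 * X 0, X (2:Fin 3) ^ 2} := by
      rw [rIdeal_eq']
      have hn := neg_mem hmem
      rwa [neg_sub] at hn
    have := (key 1 0 (by decide) (by decide) (by decide) B A hmem').1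
    rw [rIdeal_eq'] at this
    rw [z2, ← map_mul, Ideal.Quotient.eq_zero_iff_mem]
    exact this

lemma ann_aux (i j : Fin 3) (hij : i ≠ j) (hi2 : i ≠ 2) (hj2 : j ≠ 2) (A : P3)
    (h : X i * A ∈ Ideal.span {X i * X j, X (2:Fin 3) ^ 2}) :
    A ∈ Ideal.span {X j, X (2:Fin 3) ^ 2} := by
  have hmem : X i * A - X j * 0 ∈ Ideal.span {X i * X j, X (2:Fin 3) ^ 2} := by
    rw [mul_zero, sub_zero]; exact h
  exact (key i j hij hi2 hj2 A 0 hmem).2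

lemma ann1 (a : A0R) (h : z1 * a = 0) : a ∈ Ideal.span {z2} := by
  obtain ⟨A, rfl⟩ := Ideal.Quotient.mk_surjective a
  have hmem : X 0 * A ∈ rIdeal := by
    rw [← Ideal.Quotient.eq_zero_iff_mem, map_mul]; exact h
  have := ann_aux 0 1 (by decide) (by decide) (by decide) A hmem
  rw [Ideal.mem_span_pair] at this
  obtain ⟨s, t, hst⟩ := this
  have : mkq A = mkq s * z2 := by
    have := congrArg mkq hst
    simp only [map_add, map_mul, map_pow] at this
    rw [← this, ← z2]
    have h2 : (mkq (X 2)) ^ 2 = 0 := hth2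
    rw [h2, mul_zero, add_zero]
  rw [this]
  exact Ideal.mem_span_singleton'.2 ⟨_, rfl⟩

lemma ann2 (a : A0R) (h : z2 * a = 0) : a ∈ Ideal.span {z1} := by
  obtain ⟨A, rfl⟩ := Ideal.Quotient.mk_surjective a
  have hmem : X 1 * A ∈ Ideal.span {X 1 * X 0, X (2:Fin 3) ^ 2} := by
    rw [rIdeal_eq', ← Ideal.Quotient.eq_zero_iff_mem, map_mul]; exact h
  have := ann_aux 1 0 (by decide) (by decide) (by decide) A hmem
  rw [Ideal.mem_span_pair] at this
  obtain ⟨s, t, hst⟩ := this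
  have : mkq A = mkq s * z1 := by
    have := congrArg mkq hst
    simp only [map_add, map_mul, map_pow] at this
    rw [← this, ← z1]
    have h2 : (mkq (X 2)) ^ 2 = 0 := hth2
    rw [h2, mul_zero, add_zero]
  rw [this]
  exact Ideal.mem_span_singleton'.2 ⟨_, rfl⟩

lemma mk_C (α : ℂ) : mkq (C α) = algebraMap ℂ A0R α := rfl

lemma decompA (a : A0R) : ∃ (α β : ℂ) (r : A0R), r ∈ Ideal.span {z1, z2} ∧
    a = algebraMap ℂ A0R α + algebraMap ℂ A0R β * th + r := by
  obtain ⟨A, rfl⟩ := Ideal.Quotient.mk_surjective a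
  obtain ⟨α, β, hmem⟩ := poly_decomp A
  refine ⟨α, β, mkq (A - (C α + C β * X 2)), ?_, ?_⟩
  · have h1 : mkq (A - (C α + C β * X 2)) ∈
        Ideal.map mkq (Ideal.span {(X 0 : P3), X 1, X 2 ^ 2}) :=
      Ideal.mem_map_of_mem _ hmem
    rw [Ideal.map_span] at h1
    have himg : (mkq) '' {(X 0 : P3), X 1, X 2 ^ 2} = {z1, z2, mkq (X 2 ^ 2)} := by
      simp [Set.image_insert_eq, z1, z2]
    rw [himg] at h1
    have hle : Ideal.span {z1, z2, mkq (X 2 ^ 2)} ≤ Ideal.span {z1, z2} := by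
      rw [Ideal.span_le]
      rintro x (rfl | rfl | rfl)
      · exact Ideal.subset_span (by simp)
      · exact Ideal.subset_span (by simp)
      · rw [Ideal.Quotient.eq_zero_iff_mem.2 X2sq_mem]; exact zero_mem _
    exact hle h1
  · rw [map_sub, map_add, map_mul, mk_C, mk_C, ← th]
    ring

lemma constA (α β : ℂ)
    (h : algebraMap ℂ A0R α + algebraMap ℂ A0R β * th ∈ Ideal.span {z1, z2}) :
    α = 0 ∧ β = 0 := by
  have hspan : Ideal.span {z1, z2} = Ideal.map mkq (Ideal.span {(X 0 : P3), X 1}) := by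
    rw [Ideal.map_span]
    congr 1
    simp [Set.image_insert_eq, z1, z2]
  rw [hspan] at h
  have heq : algebraMap ℂ A0R α + algebraMap ℂ A0R β * th = mkq (C α + C β * X 2) := by
    rw [map_add, map_mul, mk_C, mk_C, ← th]
  rw [heq] at h
  rw [Ideal.mem_quotient_iff_mem_sup] at h
  have hsup : Ideal.span {(X 0 : P3), X 1} ⊔ rIdeal
      = Ideal.span ({(X 0 : P3), X 1} ∪ {X 0 * X 1, X 2 ^ 2}) := by
    rw [Ideal.span_union, rIdeal]
  rw [hsup] at h
  -- push into span {X 2 ^ 2} via sg 0 ∘ sg 1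
  set ρ : P3 →ₐ[ℂ] P3 := (sg 0).comp (sg 1) with hρ
  have hmap : ρ (C α + C β * X 2) ∈
      Ideal.map ρ.toRingHom (Ideal.span ({(X 0 : P3), X 1} ∪ {X 0 * X 1, X 2 ^ 2})) :=
    Ideal.mem_map_of_mem _ h
  have hρ0 : ρ (X 0) = 0 := by simp [hρ, sg_X_ne 1 0 (by decide), sg_X_same 0]
  have hρ1 : ρ (X 1) = 0 := by simp [hρ, sg_X_same 1]
  have hρ2 : ρ (X 2) = X 2 := by
    simp [hρ, sg_X_ne 1 2 (by decide), sg_X_ne 0 2 (by decide)]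
  have hρC : ∀ γ : ℂ, ρ (C γ) = C γ := fun γ => by simp [hρ, sg]
  have hρval : ρ (C α + C β * X 2) = C α + C β * X 2 := by
    rw [map_add, map_mul, hρ2, hρC, hρC]
  rw [Ideal.map_span, hρval] at hmap
  have himg : (ρ.toRingHom) '' ({(X 0 : P3), X 1} ∪ {X 0 * X 1, X 2 ^ 2})
      ⊆ {(0 : P3), X 2 ^ 2} := by
    rintro x ⟨y, hy, rfl⟩
    rcases hy with (rfl | rfl) | (rfl | rfl)
    · simp [hρ0]
    · simp [hρ1]
    · show ρ (X 0 * X 1) ∈ _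
      rw [map_mul, hρ0, zero_mul]; simp
    · show ρ (X 2 ^ 2) ∈ _
      rw [map_pow, hρ2]; simp
  have hle2 : Ideal.span ((ρ.toRingHom) '' ({(X 0 : P3), X 1} ∪ {X 0 * X 1, X 2 ^ 2}))
      ≤ Ideal.span {(0 : P3), X 2 ^ 2} := Ideal.span_mono himg
  have h4 : (C α + C β * X 2 : P3) ∈ Ideal.span {(0 : P3), X 2 ^ 2} := hle2 hmap
  have h5 : (C α + C β * X 2 : P3) ∈ Ideal.span {(X 2 ^ 2 : P3)} := by
    rwa [Ideal.span_insert, Ideal.span_singleton_eq_bot.2 rfl, bot_sup_eq] at h4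
  rw [Ideal.mem_span_singleton] at h5
  obtain ⟨q, hq⟩ := h5
  have Cdvd : ∀ γ : ℂ, (X 2 : P3) ∣ C γ → γ = 0 := by
    intro γ hγ
    have h0 := (X_dvd_iff_sg 2 (C γ)).1 hγ
    simpa [sg] using h0
  have hα : α = 0 := by
    refine Cdvd α ?_
    have h6 : (X 2 : P3) ∣ C α + C β * X 2 := ⟨X 2 * q, by rw [hq]; ring⟩
    simpa using dvd_sub h6 (dvd_mul_left (X 2) (C β))
  subst hα
  refine ⟨rfl, ?_⟩
  rw [map_zero, zero_add] at hq
  have hc : X 2 * C β = X 2 * (X 2 * q) := by rw [mul_comm (X 2) (C β), hq]; ring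
  exact Cdvd β ⟨q, mul_left_cancel₀ (X_ne_zero (2 : Fin 3)) hc⟩
-- the relation vector
def relv : Fin 3 → A0R := z2 • dd 0 + z1 • dd 1

lemma relv_apply : relv 0 = z2 ∧ relv 1 = z1 ∧ relv 2 = 0 := by
  refine ⟨?_, ?_, ?_⟩ <;>
    simp [relv, dd, Pi.single_apply]

-- test: psi
def psi : (Fin 3 → A0R) →ₗ[A0R] A0R × A0R where
  toFun v := (z1 * v 0 - z2 * v 1, v 2)
  map_add' u v := by
    simp only [Pi.add_apply, Prod.mk_add_mk]
    congr 1; ring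
  map_smul' a v := by
    simp only [Pi.smul_apply, smul_eq_mul, RingHom.id_apply, Prod.smul_mk, smul_eq_mul]
    congr 1; ring

lemma hker : omegaRelModR ≤ LinearMap.ker psi := by
  rw [omegaRelModR, Submodule.span_le]
  rintro x rfl
  rw [SetLike.mem_coe, LinearMap.mem_ker]
  show psi relv = 0
  obtain ⟨h0, h1, h2⟩ := relv_apply
  show (z1 * relv 0 - z2 * relv 1, relv 2) = 0
  rw [h0, h1, h2]
  rw [Prod.mk_eq_zero]
  constructor
  · ring
  · rfl

def phi : OmegaR →ₗ[A0R] A0R × A0R := omegaRelModR.liftQ psi hker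

lemma hphi : ∀ v : Fin 3 → A0R,
    phi (Submodule.Quotient.mk v) = (z1 * v 0 - z2 * v 1, v 2) := fun _ => rfl

lemma kmem_span : k ∈ Submodule.span A0R {k} := Submodule.subset_span rfl

lemma kerphi : LinearMap.ker phi = Submodule.span A0R {k} := by
  apply le_antisymm
  · intro x hx
    obtain ⟨v, rfl⟩ := Submodule.Quotient.mk_surjective _ x
    rw [LinearMap.mem_ker] at hx
    rw [hphi v, Prod.mk_eq_zero] at hx
    obtain ⟨h1, h2⟩ := hx
    have heq : z1 * v 0 = z2 * v 1 := by linear_combination h1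
    obtain ⟨e1, e2⟩ := eqzero _ _ heq
    obtain ⟨c, hc⟩ := Ideal.mem_span_singleton'.1 (ann1 _ e1)
    obtain ⟨d, hd⟩ := Ideal.mem_span_singleton'.1 (ann2 _ e2)
    have hveq : v = c • relv + (d - c) • (z1 • dd 1) := by
      funext j; fin_cases j
      · show v 0 = (c • relv + (d - c) • (z1 • dd 1)) 0
        simp [relv, dd, Pi.single_apply]
        linear_combination -hc
      · show v 1 = (c • relv + (d - c) • (z1 • dd 1)) 1
        simp [relv, dd, Pi.single_apply]
        linear_combination -hd
      · show v 2 = (c • relv + (d - c) • (z1 • dd 1)) 2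
        simp [relv, dd, Pi.single_apply]
        exact h2
    rw [hveq, Submodule.Quotient.mk_add, Submodule.Quotient.mk_smul,
      Submodule.Quotient.mk_smul]
    have hrel0 : (Submodule.Quotient.mk relv : OmegaR) = 0 :=
      (Submodule.Quotient.mk_eq_zero _).2 (Submodule.subset_span rfl)
    rw [hrel0, smul_zero, zero_add]
    exact Submodule.smul_mem _ _ kmem_span
  · rw [Submodule.span_le]
    rintro x rfl
    rw [SetLike.mem_coe, LinearMap.mem_ker]
    show psi (z1 • dd 1) = 0
    show (z1 * (z1 • dd 1) 0 - z2 * (z1 • dd 1) 1, (z1 • dd 1) 2) = 0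
    rw [Prod.mk_eq_zero]
    constructor
    · simp [dd, Pi.single_apply]
      linear_combination hz12
    · simp [dd, Pi.single_apply]

lemma smul_k (a : A0R) : a • k = 0 ↔ a ∈ Ideal.span {z1, z2} := by
  rw [k, ← Submodule.Quotient.mk_smul, Submodule.Quotient.mk_eq_zero,
    omegaRelModR, Submodule.mem_span_singleton]
  constructor
  · rintro ⟨c, hc⟩
    -- hc : c • (z2 • dd 0 + z1 • dd 1) = a • z1 • dd 1
    have h0 : c * z2 = 0 := by
      have := congrFun hc 0
      simpa [dd, Pi.single_apply] using this
    have h1 : c * z1 = a * z1 := by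
      have := congrFun hc 1
      simpa [dd, Pi.single_apply] using this
    obtain ⟨u, hu⟩ := Ideal.mem_span_singleton'.1 (ann2 c (by linear_combination h0))
    have hz : z1 * (a - u * z1) = 0 := by
      linear_combination -h1 - z1 * hu
    obtain ⟨s, hs⟩ := Ideal.mem_span_singleton'.1 (ann1 _ hz)
    rw [Ideal.mem_span_pair]
    exact ⟨u, s, by linear_combination hs⟩
  · intro ha
    obtain ⟨p, q, hpq⟩ := Ideal.mem_span_pair.1 ha
    refine ⟨p * z1, ?_⟩
    funext j; fin_cases j
    · show (p * z1) • (z2 • dd 0 + z1 • dd 1) 0 = (a • z1 • dd 1) 0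
      simp [dd, Pi.single_apply]
      linear_combination p * hz12
    · show (p * z1) • (z2 • dd 0 + z1 • dd 1) 1 = (a • z1 • dd 1) 1
      simp [dd, Pi.single_apply]
      linear_combination z1 * hpq - q * hz12
    · show (p * z1) • (z2 • dd 0 + z1 • dd 1) 2 = (a • z1 • dd 1) 2
      simp [dd, Pi.single_apply]

lemma thk_ne : th • k ≠ 0 := by
  intro h
  rw [smul_k] at h
  have := constA 0 1 (by simpa using h)
  exact one_ne_zero this.2

lemma part_d : LinearIndependent ℂ ![k, th • k] := by
  rw [linearIndependent_fin2]
  refine ⟨by simpa using thk_ne, ?_⟩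
  intro a h
  simp only [Matrix.cons_val_one, Matrix.head_cons, Matrix.cons_val_zero] at h
  have h1 : (algebraMap ℂ A0R a * th - 1) • k = 0 := by
    rw [sub_smul, mul_smul, one_smul, algebraMap_smul, h, sub_self]
  rw [smul_k] at h1
  have h2 : algebraMap ℂ A0R (-1) + algebraMap ℂ A0R a * th ∈ Ideal.span {z1, z2} := by
    have : algebraMap ℂ A0R (-1) + algebraMap ℂ A0R a * th
        = algebraMap ℂ A0R a * th - 1 := by
      rw [map_neg, map_one]; ring
    rw [this]; exact h1
  have := (constA (-1) a h2).1
  norm_num at this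

lemma part_e : Submodule.span ℂ {k, th • k} = (LinearMap.ker phi).restrictScalars ℂ := by
  apply le_antisymm
  · rw [Submodule.span_le]
    rintro x (rfl | rfl)
    · rw [SetLike.mem_coe, Submodule.restrictScalars_mem, kerphi]
      exact kmem_span
    · rw [SetLike.mem_coe, Submodule.restrictScalars_mem, kerphi]
      exact Submodule.smul_mem _ _ kmem_span
  · intro x hx
    rw [Submodule.restrictScalars_mem, kerphi, Submodule.mem_span_singleton] at hx
    obtain ⟨a, rfl⟩ := hx
    obtain ⟨α, β, r, hr, rfl⟩ := decompA a
    have : (algebraMap ℂ A0R α + algebraMap ℂ A0R β * th + r) • k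
        = α • k + β • (th • k) := by
      rw [add_smul, add_smul, (smul_k r).2 hr, add_zero, algebraMap_smul,
        mul_smul, algebraMap_smul]
    rw [this]
    exact Submodule.add_mem _
      (Submodule.smul_mem _ _ (Submodule.subset_span (by simp)))
      (Submodule.smul_mem _ _ (Submodule.subset_span (by simp)))

lemma part_f : LinearMap.range phi
    = Submodule.prod (Ideal.span {z1, z2}) (⊤ : Submodule A0R A0R) := by
  apply le_antisymm
  · rintro x ⟨y, rfl⟩
    obtain ⟨v, rfl⟩ := Submodule.Quotient.mk_surjective _ y
    rw [hphi v, Submodule.mem_prod]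
    exact ⟨Ideal.mem_span_pair.2 ⟨v 0, -(v 1), by ring⟩, trivial⟩
  · rintro ⟨s, t⟩ hst
    obtain ⟨hs, -⟩ := Submodule.mem_prod.1 hst
    obtain ⟨p, q, hpq⟩ := Ideal.mem_span_pair.1 hs
    refine ⟨Submodule.Quotient.mk ![p, -q, t], ?_⟩
    rw [hphi]
    simp only [Matrix.cons_val_zero, Matrix.cons_val_one, Matrix.head_cons,
      Matrix.cons_val_two, Matrix.tail_cons]
    rw [Prod.mk.injEq]
    exact ⟨by linear_combination hpq, rfl⟩


end AuxLemmas

/-- the `A₀ᴿ`-linear map `φ : Ω → A₀ᴿ ⊕ A₀ᴿ` with `φ(dz₁) = (z̄₁, 0)`,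
`φ(dz₂) = (−z̄₂, 0)`, `φ(dθ) = (0, 1)` is well defined;
(a) its kernel is the cyclic submodule generated by `k = z₁·dz₂`, whose annihilator is
exactly `(z̄₁, z̄₂)`, and the kernel is a two-dimensional ℂ-vector space with basis
`k`, `θ·k`; and
(b) its image is `(z̄₁, z̄₂) ⊕ A₀ᴿ`, so the cokernel is isomorphic to `A₀ᴿ/(z̄₁, z̄₂)`. -/
theorem ramond_differentials_kernel_cokernel :
    ∃ φ : OmegaR →ₗ[A0R] A0R × A0R,
      (∀ v : Fin 3 → A0R,
        φ (Submodule.Quotient.mk v) = (z1 * v 0 - z2 * v 1, v 2)) ∧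
      LinearMap.ker φ = Submodule.span A0R {k} ∧
      (∀ a : A0R, a • k = 0 ↔ a ∈ Ideal.span {z1, z2}) ∧
      LinearIndependent ℂ ![k, th • k] ∧
      Submodule.span ℂ {k, th • k} = (LinearMap.ker φ).restrictScalars ℂ ∧
      LinearMap.range φ = Submodule.prod (Ideal.span {z1, z2}) (⊤ : Submodule A0R A0R) :=
  ⟨phi, hphi, kerphi, smul_k, part_d, part_e, part_f⟩

end
end

section
/- Every ℂ-linear derivation v : A₀ᴿ → A₀ᴿ satisfies v(z̄₁) ∈ (z̄₁) and v(z̄₂) ∈ (z̄₂), where (z̄ᵢ) denotes the principal ideal of A₀ᴿ generated by z̄ᵢ. -/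
set_option maxHeartbeats 1000000


open MvPolynomial

noncomputable section

open DualNumber Polynomial in
/-- Generic annihilator lemma: if `X j ^ 2 * p ∈ rIdeal` then `mk p ∈ (mk (X k))`,
where `{j, k} = {0, 1}`. -/
lemma ramond_ann (j k : Fin 3) (hj2 : j ≠ 2) (hk2 : k ≠ 2) (hjk : j ≠ k)
    (hall : ∀ i : Fin 3, i = j ∨ i = k ∨ i = 2)
    (hgen : (X j * X k : P3) = X 0 * X 1)
    (p : P3) (hp : (X j : P3) ^ 2 * p ∈ rIdeal) :
    Ideal.Quotient.mk rIdeal p ∈ Ideal.span {Ideal.Quotient.mk rIdeal (X k)} := by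
  classical
  -- the evaluation map to dual numbers over ℂ[X]
  set f : Fin 3 → (Polynomial ℂ)[ε] :=
    fun i => if i = j then TrivSqZeroExt.inl Polynomial.X else if i = 2 then ε else 0 with hf
  set φ : P3 →ₐ[ℂ] (Polynomial ℂ)[ε] := MvPolynomial.aeval f with hφ
  have hφj : φ (X j) = TrivSqZeroExt.inl Polynomial.X := by simp [hφ, hf]
  have hφk : φ (X k) = 0 := by simp [hφ, hf, hjk.symm, hk2]
  have hφ2 : φ (X 2) = ε := by simp [hφ, hf, hj2.symm]
  -- φ kills rIdeal
  have hker : ∀ q ∈ rIdeal, φ q = 0 := by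
    intro q hq
    have : rIdeal ≤ RingHom.ker (φ : P3 →+* (Polynomial ℂ)[ε]) := by
      rw [rIdeal, Ideal.span_le]
      rintro r hr
      simp only [Set.mem_insert_iff, Set.mem_singleton_iff] at hr
      rcases hr with rfl | rfl
      · have : φ (X 0 * X 1) = 0 := by
          rw [← hgen, map_mul, hφk, mul_zero]
        simpa [RingHom.mem_ker] using this
      · have : φ (X 2 ^ 2) = 0 := by
          rw [map_pow, hφ2, sq, eps_mul_eps]
        simpa [RingHom.mem_ker] using this
    exact this hq
  -- hence φ p = 0, by regularity of X^2 in the dual numbers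
  have hφp : φ p = 0 := by
    have h0 : φ ((X j : P3) ^ 2 * p) = 0 := hker _ hp
    rw [map_mul, map_pow, hφj, TrivSqZeroExt.inl_pow] at h0
    have hfst := congrArg TrivSqZeroExt.fst h0
    have hsnd := congrArg TrivSqZeroExt.snd h0
    rw [TrivSqZeroExt.fst_mul, TrivSqZeroExt.fst_inl, TrivSqZeroExt.fst_zero] at hfst
    rw [DualNumber.snd_mul, TrivSqZeroExt.snd_inl, TrivSqZeroExt.fst_inl,
      TrivSqZeroExt.snd_zero, zero_mul, add_zero] at hsnd
    have hX : (Polynomial.X : Polynomial ℂ) ^ 2 ≠ 0 := pow_ne_zero _ Polynomial.X_ne_zero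
    ext1
    · exact (mul_eq_zero.mp hfst).resolve_left hX
    · exact (mul_eq_zero.mp hsnd).resolve_left hX
  -- now build the section Φ : (ℂ[X])[ε] →ₐ P3 ⧸ J
  set J : Ideal P3 := Ideal.span {X k, X 2 ^ 2} with hJ
  set mkJ : P3 →ₐ[ℂ] P3 ⧸ J := Ideal.Quotient.mkₐ ℂ J with hmkJ
  have hθ : mkJ (X 2) * mkJ (X 2) = 0 := by
    rw [← map_mul, ← sq]
    exact Ideal.Quotient.eq_zero_iff_mem.mpr
      (Ideal.subset_span (by simp))
  set Φ : (Polynomial ℂ)[ε] →ₐ[ℂ] P3 ⧸ J :=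
    DualNumber.lift ⟨(Polynomial.aeval (mkJ (X j)), mkJ (X 2)), hθ, fun a => Commute.all _ _⟩
    with hΦ
  have hcomp : Φ.comp φ = mkJ := by
    apply MvPolynomial.algHom_ext
    intro i
    rcases hall i with rfl | rfl | rfl
    · simp [AlgHom.comp_apply, hφj, hΦ]
    · rw [AlgHom.comp_apply, hφk, map_zero]
      exact (Ideal.Quotient.eq_zero_iff_mem.mpr (Ideal.subset_span (by simp))).symm
    · simp [AlgHom.comp_apply, hφ2, hΦ]
  -- p ∈ J
  have hpJ : p ∈ J := by
    have : mkJ p = 0 := by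
      rw [← hcomp, AlgHom.comp_apply, hφp, map_zero]
    exact Ideal.Quotient.eq_zero_iff_mem.mp this
  rw [hJ, Ideal.mem_span_pair] at hpJ
  obtain ⟨a, b, hab⟩ := hpJ
  rw [← hab, map_add, map_mul, map_mul]
  have h2 : Ideal.Quotient.mk rIdeal ((X 2 : P3) ^ 2) = 0 :=
    Ideal.Quotient.eq_zero_iff_mem.mpr (Ideal.subset_span (by simp))
  rw [h2, mul_zero, add_zero]
  exact Ideal.mem_span_singleton.mpr ⟨Ideal.Quotient.mk rIdeal a, mul_comm _ _⟩

/-- every ℂ-linear derivation `v : A₀ᴿ → A₀ᴿ` satisfies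
`v(z̄₁) ∈ (z̄₁)` and `v(z̄₂) ∈ (z̄₂)`. -/
theorem derivation_at_Ramond_node :
    ∀ v : Derivation ℂ A0R A0R,
      v z1 ∈ Ideal.span {z1} ∧ v z2 ∈ Ideal.span {z2} := by
  intro v
  have h0 : z1 * z2 = 0 := by
    rw [z1, z2, ← map_mul]
    exact Ideal.Quotient.eq_zero_iff_mem.mpr (Ideal.subset_span (by simp))
  have hleib : z1 * v z2 + z2 * v z1 = 0 := by
    have := v.leibniz z1 z2
    rw [h0, map_zero] at this
    simpa [smul_eq_mul] using this.symm
  have key : ∀ (x : A0R) (j k : Fin 3), j ≠ 2 → k ≠ 2 → j ≠ k →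
      (∀ i : Fin 3, i = j ∨ i = k ∨ i = 2) → (X j * X k : P3) = X 0 * X 1 →
      Ideal.Quotient.mk rIdeal (X j) ^ 2 * x = 0 →
      x ∈ Ideal.span {Ideal.Quotient.mk rIdeal (X k)} := by
    intro x j k hj2 hk2 hjk hall hgen hx
    obtain ⟨p, rfl⟩ := Ideal.Quotient.mk_surjective x
    apply ramond_ann j k hj2 hk2 hjk hall hgen
    rw [← Ideal.Quotient.eq_zero_iff_mem, map_mul, map_pow]
    exact hx
  constructor
  · -- z2^2 * v z1 = 0
    have h1 : z2 ^ 2 * v z1 = 0 := by linear_combination z2 * hleib - (v z2) * h0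
    have := key (v z1) 1 0 (by decide) (by decide) (by decide) (by decide)
      (mul_comm _ _) (by rw [show Ideal.Quotient.mk rIdeal (X 1) = z2 from rfl]; exact h1)
    simpa [z1] using this
  · have h2 : z1 ^ 2 * v z2 = 0 := by linear_combination z1 * hleib - (v z1) * h0
    have := key (v z2) 0 1 (by decide) (by decide) (by decide) (by decide)
      rfl (by rw [show Ideal.Quotient.mk rIdeal (X 0) = z1 from rfl]; exact h2)
    simpa [z2] using this


end
end
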